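/- Let K be a finite set of Avatars with per-Avatar power weights w : K → ℝ, w_k > 0 for all k, and let Q = (1/2)·Σ_{k∈K} w_k. For an assignment δ : K → {1,2} of Avatars to two cloudlets, let P_i(δ) = Σ_{k : δ(k)=i} w_k. Then there exists an assignment δ with max(P₁(δ) − Q, 0) + max(P₂(δ) − Q, 0) = 0 if and only if there exists a subset S ⊆ K with Σ_{k∈S} w_k = Q. In other words, the two-cloudlet instance with equal green generation Q admits zero on-grid energy consumption exactly when the weights w_k admit an equal-sum partition. -/

import Mathlib

/-! The two cloudlet loads always add up to `∑ w = 2Q`, so both on-grid terms vanish iff both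
loads are at most `Q`, iff the load of the first cloudlet is exactly `Q`; and the Avatars on the
first cloudlet can be an arbitrary subset. -/

open Finset

theorem max_sub_add_max_sub_eq_zero_iff {α : Type*} [AddCommGroup α] [LinearOrder α]
    [IsOrderedAddMonoid α] {a b q : α} (h : a + b = q + q) :
    max (a - q) 0 + max (b - q) 0 = 0 ↔ a = q := by
  rw [add_eq_zero_iff_of_nonneg (le_max_right _ _) (le_max_right _ _), max_eq_right_iff,
    max_eq_right_iff, sub_nonpos, sub_nonpos]
  constructor
  · rintro ⟨ha, hb⟩
    exact le_antisymm ha (le_of_add_le_add_right (h.symm.trans_le (add_le_add_right hb a)))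
  · rintro rfl
    exact ⟨le_rfl, (add_left_cancel h).le⟩

theorem sum_fiber_zero_add_sum_fiber_one {K M : Type*} [Fintype K] [AddCommMonoid M]
    (δ : K → Fin 2) (w : K → M) :
    ∑ k ∈ univ.filter (δ · = 0), w k + ∑ k ∈ univ.filter (δ · = 1), w k = ∑ k, w k := by
  rw [← Fin.sum_univ_two (fun i => ∑ k ∈ univ.filter (δ · = i), w k)]
  exact sum_fiberwise univ δ w

theorem exists_fin_two_fiber_zero_eq {K : Type*} [Fintype K] (S : Finset K) :
    ∃ δ : K → Fin 2, univ.filter (δ · = 0) = S := by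
  classical
  exact ⟨fun k => if k ∈ S then 0 else 1, by ext k; by_cases hk : k ∈ S <;> simp [hk]⟩

theorem stmt_3_general {K : Type*} [Fintype K]
    (w : K → ℝ) (Q : ℝ) (hQ : Q = (1 / 2) * ∑ k, w k) :
    (∃ δ : K → Fin 2,
      max ((∑ k ∈ Finset.univ.filter (fun k => δ k = 0), w k) - Q) 0 +
      max ((∑ k ∈ Finset.univ.filter (fun k => δ k = 1), w k) - Q) 0 = 0) ↔
    ∃ S : Finset K, ∑ k ∈ S, w k = Q := by
  have hsplit (δ : K → Fin 2) :
      ∑ k ∈ univ.filter (δ · = 0), w k + ∑ k ∈ univ.filter (δ · = 1), w k = Q + Q := by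
    rw [sum_fiber_zero_add_sum_fiber_one, hQ]
    ring
  refine (exists_congr fun δ => max_sub_add_max_sub_eq_zero_iff (hsplit δ)).trans ⟨?_, ?_⟩
  · rintro ⟨δ, hδ⟩
    exact ⟨_, hδ⟩
  · rintro ⟨S, hS⟩
    obtain ⟨δ, rfl⟩ := exists_fin_two_fiber_zero_eq S
    exact ⟨δ, hS⟩

/-- Two-cloudlet instance with equal green generation `Q = (1/2) ∑ w` admits
zero on-grid energy iff the weights admit an equal-sum partition. -/
theorem stmt_3 {K : Type*} [Fintype K] [DecidableEq K]
    (w : K → ℝ) (hw : ∀ k, 0 < w k) (Q : ℝ) (hQ : Q = (1 / 2) * ∑ k, w k) :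
    (∃ δ : K → Fin 2,
      max ((∑ k ∈ Finset.univ.filter (fun k => δ k = 0), w k) - Q) 0 +
      max ((∑ k ∈ Finset.univ.filter (fun k => δ k = 1), w k) - Q) 0 = 0) ↔
    ∃ S : Finset K, ∑ k ∈ S, w k = Q :=
  stmt_3_general w Q hQ
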